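/- Numerical stability of the error propagation (Proposition, corrected hypotheses): let n be a positive integer and let a, B be real numbers with 0 ≤ a < 1 and B ≥ 0. For each i ∈ ℕ let Â_i be a real n × n matrix with operator norm ‖Â_i‖ ≤ a and b_i ∈ ℝⁿ a vector with ‖b_i‖ ≤ B, and let A_i be the (1 + n) × (1 + n) block matrix [[1, 0], [b_i, Â_i]]. Then there exists a constant C ∈ ℝ (depending only on n, a, B) such that for every k ∈ ℕ and every ε₀ ∈ ℝ^{1+n}, the propagated error ε_k = A_{k−1} ⋯ A_1 A_0 ε₀ satisfies ‖ε_k‖ ≤ C·‖ε₀‖. In particular, for any two trajectories x_k, y_k of a discrete system whose stepwise error satisfies x_{k+1} − y_{k+1} = A_k (x_k − y_k), the difference ‖x_k − y_k‖ remains bounded as k → ∞ by C·‖x₀ − y₀‖. -/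

import Mathlib

open Matrix

/-- `revProd M k = M (k-1) * ⋯ * M 1 * M 0`, the product of the first `k` terms of
the sequence `M` with the highest index on the left (empty product is `1`). -/
def revProd {α : Type*} [Monoid α] (M : ℕ → α) : ℕ → α
  | 0 => 1
  | k + 1 => M k * revProd M k

/-! Every `A i` fixes the first coordinate `c` of a vector and maps its remaining coordinates
`t` to `c • b i + Â i t`. Since `‖Â i‖ ≤ a < 1`, the norms `u k` of these tails satisfy
`u (k + 1) ≤ |c| B + a u k`, which keeps them below `max (u 0) (|c| B / (1 - a))`; with
`|c|, u 0 ≤ ‖ε₀‖` this gives `‖ε_k‖ ≤ (2 + B / (1 - a)) ‖ε₀‖`. -/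

variable {κ : Type*}

namespace EuclideanSpace

def tail (v : EuclideanSpace ℝ (Fin 1 ⊕ κ)) : EuclideanSpace ℝ κ :=
  WithLp.toLp 2 fun j => v (Sum.inr j)

@[simp]
lemma tail_apply (v : EuclideanSpace ℝ (Fin 1 ⊕ κ)) (j : κ) : tail v j = v (Sum.inr j) := rfl

variable [Fintype κ]

lemma norm_sq_eq_sq_add_norm_tail_sq (v : EuclideanSpace ℝ (Fin 1 ⊕ κ)) :
    ‖v‖ ^ 2 = v (Sum.inl 0) ^ 2 + ‖tail v‖ ^ 2 := by
  simp [real_norm_sq_eq, Fintype.sum_sum_type]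

lemma norm_tail_le (v : EuclideanSpace ℝ (Fin 1 ⊕ κ)) : ‖tail v‖ ≤ ‖v‖ :=
  (sq_le_sq₀ (norm_nonneg _) (norm_nonneg _)).1 <| by
    rw [norm_sq_eq_sq_add_norm_tail_sq v]; nlinarith [sq_nonneg (v (Sum.inl 0))]

lemma norm_le_abs_add_norm_tail (v : EuclideanSpace ℝ (Fin 1 ⊕ κ)) :
    ‖v‖ ≤ |v (Sum.inl 0)| + ‖tail v‖ := by
  refine le_of_sq_le_sq ?_ (by positivity)
  nlinarith [norm_sq_eq_sq_add_norm_tail_sq v, sq_abs (v (Sum.inl 0)), abs_nonneg (v (Sum.inl 0)),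
    norm_nonneg (tail v)]

end EuclideanSpace

open EuclideanSpace

/-- The matrix of the affine map `t ↦ Â t + b` in homogeneous coordinates. -/
def affineBlock (b : EuclideanSpace ℝ κ) (Ahat : Matrix κ κ ℝ) :
    Matrix (Fin 1 ⊕ κ) (Fin 1 ⊕ κ) ℝ :=
  fromBlocks 1 0 (of fun r (_ : Fin 1) => WithLp.equiv 2 (κ → ℝ) b r) Ahat

variable [Fintype κ] [DecidableEq κ]

section

variable (b : EuclideanSpace ℝ κ) (Ahat : Matrix κ κ ℝ) (v : EuclideanSpace ℝ (Fin 1 ⊕ κ))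

@[simp]
lemma toEuclideanCLM_affineBlock_apply_inl :
    toEuclideanCLM (𝕜 := ℝ) (affineBlock b Ahat) v (Sum.inl 0) = v (Sum.inl 0) := by
  simp [affineBlock, fromBlocks_mulVec]

lemma tail_toEuclideanCLM_affineBlock_apply :
    tail (toEuclideanCLM (𝕜 := ℝ) (affineBlock b Ahat) v) =
      v (Sum.inl 0) • b + toEuclideanCLM (𝕜 := ℝ) Ahat (tail v) := by
  ext j
  simp [affineBlock, mulVec, dotProduct, mul_comm]

end

lemma le_max_div_one_sub_of_le_add_mul {u : ℕ → ℝ} {a β : ℝ} (ha0 : 0 ≤ a) (ha1 : a < 1)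
    (h : ∀ k, u (k + 1) ≤ β + a * u k) (k : ℕ) : u k ≤ max (u 0) (β / (1 - a)) := by
  set M := max (u 0) (β / (1 - a))
  have hβ : β ≤ (1 - a) * M := by
    rw [← div_le_iff₀' (by linarith)]; exact le_max_right _ _
  induction k with
  | zero => exact le_max_left _ _
  | succ k ih => nlinarith [h k, mul_le_mul_of_nonneg_left ih ha0]

theorem norm_le_of_affineBlock_trajectory {a B : ℝ} (ha0 : 0 ≤ a) (ha1 : a < 1) (hB : 0 ≤ B)
    {Ahat : ℕ → Matrix κ κ ℝ} {b : ℕ → EuclideanSpace ℝ κ}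
    (hAhat : ∀ i, ‖toEuclideanCLM (𝕜 := ℝ) (Ahat i)‖ ≤ a) (hb : ∀ i, ‖b i‖ ≤ B)
    (w : ℕ → EuclideanSpace ℝ (Fin 1 ⊕ κ))
    (hw : ∀ k, w (k + 1) = toEuclideanCLM (𝕜 := ℝ) (affineBlock (b k) (Ahat k)) (w k)) (k : ℕ) :
    ‖w k‖ ≤ (2 + B / (1 - a)) * ‖w 0‖ := by
  set c := w 0 (Sum.inl 0)
  have head_eq : ∀ k, w k (Sum.inl 0) = c := by
    intro k
    induction k with
    | zero => rfl
    | succ k ih => rw [hw, toEuclideanCLM_affineBlock_apply_inl, ih]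
  have tail_step : ∀ k, ‖tail (w (k + 1))‖ ≤ |c| * B + a * ‖tail (w k)‖ := by
    intro k
    rw [hw, tail_toEuclideanCLM_affineBlock_apply, head_eq]
    refine (norm_add_le _ _).trans (add_le_add ?_ ?_)
    · rw [norm_smul, Real.norm_eq_abs]
      exact mul_le_mul_of_nonneg_left (hb k) (abs_nonneg c)
    · exact (ContinuousLinearMap.le_opNorm _ _).trans
        (mul_le_mul_of_nonneg_right (hAhat k) (norm_nonneg _))
  have tail_bound :=
    le_max_div_one_sub_of_le_add_mul (u := fun k => ‖tail (w k)‖) ha0 ha1 tail_step k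
  have hc : |c| ≤ ‖w 0‖ := PiLp.norm_apply_le (w 0) (Sum.inl 0)
  have hBa : 0 ≤ B / (1 - a) := div_nonneg hB (by linarith)
  calc ‖w k‖ ≤ |c| + ‖tail (w k)‖ := head_eq k ▸ norm_le_abs_add_norm_tail (w k)
    _ ≤ |c| + (‖tail (w 0)‖ + |c| * B / (1 - a)) := by
      gcongr
      exact tail_bound.trans (max_le_add_of_nonneg (norm_nonneg _) (by positivity))
    _ ≤ (2 + B / (1 - a)) * ‖w 0‖ := by
      rw [mul_div_assoc]
      nlinarith [norm_tail_le (w 0), mul_le_mul_of_nonneg_right hc hBa]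

theorem error_propagation_stable_general (n : ℕ) (a B : ℝ)
    (ha0 : 0 ≤ a) (ha1 : a < 1) (hB : 0 ≤ B)
    (Ahat : ℕ → Matrix (Fin n) (Fin n) ℝ)
    (b : ℕ → EuclideanSpace ℝ (Fin n))
    (hAhat : ∀ i, ‖Matrix.toEuclideanCLM (𝕜 := ℝ) (Ahat i)‖ ≤ a)
    (hb : ∀ i, ‖b i‖ ≤ B)
    (A : ℕ → Matrix (Fin 1 ⊕ Fin n) (Fin 1 ⊕ Fin n) ℝ)
    (hA : ∀ i, A i = Matrix.fromBlocks 1 0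
        (Matrix.of fun r (_ : Fin 1) => WithLp.equiv 2 (Fin n → ℝ) (b i) r)
        (Ahat i)) :
    ∃ C : ℝ,
      (∀ (k : ℕ) (ε₀ : EuclideanSpace ℝ (Fin 1 ⊕ Fin n)),
        ‖Matrix.toEuclideanCLM (𝕜 := ℝ) (revProd A k) ε₀‖ ≤ C * ‖ε₀‖) ∧
      ∀ x y : ℕ → EuclideanSpace ℝ (Fin 1 ⊕ Fin n),
        (∀ k, x (k + 1) - y (k + 1) =
            Matrix.toEuclideanCLM (𝕜 := ℝ) (A k) (x k - y k)) →
        ∀ k, ‖x k - y k‖ ≤ C * ‖x 0 - y 0‖ := by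
  obtain rfl : A = fun i => affineBlock (b i) (Ahat i) := funext hA
  have bound := norm_le_of_affineBlock_trajectory ha0 ha1 hB hAhat hb
  refine ⟨2 + B / (1 - a), fun k ε₀ => ?_, fun x y hxy => bound _ hxy⟩
  simpa [revProd] using
    bound (fun k => toEuclideanCLM (𝕜 := ℝ) (revProd _ k) ε₀)
      (fun k => by simp [revProd, map_mul]) k

/-- Numerical stability of the error propagation: if every `Â i` has Euclidean
operator norm at most `a < 1` and every `b i` has norm at most `B`, and
`A i = [[1, 0], [b i, Â i]]`, then there is a constant `C` such that every
propagated error `ε_k = A (k−1) ⋯ A 0 ε₀` satisfies `‖ε_k‖ ≤ C ‖ε₀‖`; in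
particular any two trajectories with stepwise error dynamics
`x (k+1) − y (k+1) = A k (x k − y k)` stay within `C ‖x 0 − y 0‖` of each
other forever. -/
theorem error_propagation_stable (n : ℕ) (hn : 0 < n) (a B : ℝ)
    (ha0 : 0 ≤ a) (ha1 : a < 1) (hB : 0 ≤ B)
    (Ahat : ℕ → Matrix (Fin n) (Fin n) ℝ)
    (b : ℕ → EuclideanSpace ℝ (Fin n))
    (hAhat : ∀ i, ‖Matrix.toEuclideanCLM (𝕜 := ℝ) (Ahat i)‖ ≤ a)
    (hb : ∀ i, ‖b i‖ ≤ B)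
    (A : ℕ → Matrix (Fin 1 ⊕ Fin n) (Fin 1 ⊕ Fin n) ℝ)
    (hA : ∀ i, A i = Matrix.fromBlocks 1 0
        (Matrix.of fun r (_ : Fin 1) => WithLp.equiv 2 (Fin n → ℝ) (b i) r)
        (Ahat i)) :
    ∃ C : ℝ,
      (∀ (k : ℕ) (ε₀ : EuclideanSpace ℝ (Fin 1 ⊕ Fin n)),
        ‖Matrix.toEuclideanCLM (𝕜 := ℝ) (revProd A k) ε₀‖ ≤ C * ‖ε₀‖) ∧
      ∀ x y : ℕ → EuclideanSpace ℝ (Fin 1 ⊕ Fin n),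
        (∀ k, x (k + 1) - y (k + 1) =
            Matrix.toEuclideanCLM (𝕜 := ℝ) (A k) (x k - y k)) →
        ∀ k, ‖x k - y k‖ ≤ C * ‖x 0 - y 0‖ :=
  error_propagation_stable_general n a B ha0 ha1 hB Ahat b hAhat hb A hA
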